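/- Singular value bounds for the sketched dictionary-based least-squares matrix: let U_K ∈ 𝕂^{n×K} be the matrix whose columns are the K vectors of the dictionary D_K, and let U_r ∈ 𝕂^{n×r} be the submatrix consisting of r distinct columns of U_K. Set V_r^Θ := Θ R_U⁻¹ A U_r. Then for every x ∈ 𝕂^r, ζ_{r,K}^Θ · Σ^min_{r,K} · ‖x‖ ≤ ‖V_r^Θ x‖ ≤ ι_{r,K}^Θ · Σ^max_{r,K} · ‖x‖; in particular the minimal singular value of V_r^Θ is at least ζ_{r,K}^Θ Σ^min_{r,K} and the maximal singular value of V_r^Θ is at most ι_{r,K}^Θ Σ^max_{r,K}. -/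

import Mathlib

open Matrix
open scoped ComplexOrder

noncomputable section

variable {𝕂 : Type*} [RCLike 𝕂]

/-- Canonical ℓ2 inner product on `𝕂^n` (conjugate-linear in the first argument). -/
def ip2 {n : ℕ} (x y : Fin n → 𝕂) : 𝕂 := star x ⬝ᵥ y

/-- Canonical ℓ2 norm on `𝕂^n`. -/
def norm2 {n : ℕ} (x : Fin n → 𝕂) : ℝ := Real.sqrt (RCLike.re (ip2 x x))

/-- Inner product `⟨x,y⟩_U := ⟨R x, y⟩` on `U = 𝕂^n`. -/
def ipU {n : ℕ} (R : Matrix (Fin n) (Fin n) 𝕂) (x y : Fin n → 𝕂) : 𝕂 := ip2 (R *ᵥ x) y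

/-- Norm `‖·‖_U` associated with `⟨·,·⟩_U`. -/
def normU {n : ℕ} (R : Matrix (Fin n) (Fin n) 𝕂) (x : Fin n → 𝕂) : ℝ :=
  Real.sqrt (RCLike.re (ipU R x x))

/-- Dual inner product `⟨x,y⟩_{U'} := ⟨x, R⁻¹ y⟩` on `U' = 𝕂^n`. -/
def ipDual {n : ℕ} (R : Matrix (Fin n) (Fin n) 𝕂) (x y : Fin n → 𝕂) : 𝕂 := ip2 x (R⁻¹ *ᵥ y)

/-- Dual norm `‖·‖_{U'}`. -/
def normDual {n : ℕ} (R : Matrix (Fin n) (Fin n) 𝕂) (x : Fin n → 𝕂) : ℝ :=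
  Real.sqrt (RCLike.re (ipDual R x x))

/-- Sketched semi-inner product `⟨x,y⟩_U^Θ := ⟨Θ x, Θ y⟩`. -/
def ipUS {n k : ℕ} (Θ : Matrix (Fin k) (Fin n) 𝕂) (x y : Fin n → 𝕂) : 𝕂 :=
  ip2 (Θ *ᵥ x) (Θ *ᵥ y)

/-- Sketched seminorm `‖·‖_U^Θ`. -/
def normUS {n k : ℕ} (Θ : Matrix (Fin k) (Fin n) 𝕂) (x : Fin n → 𝕂) : ℝ :=
  Real.sqrt (RCLike.re (ipUS Θ x x))

/-- Sketched dual seminorm `‖x‖_{U'}^Θ = ‖Θ R⁻¹ x‖`. -/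
def normDualS {n k : ℕ} (Θ : Matrix (Fin k) (Fin n) 𝕂) (R : Matrix (Fin n) (Fin n) 𝕂)
    (x : Fin n → 𝕂) : ℝ :=
  normUS Θ (R⁻¹ *ᵥ x)

/-- `Θ` is an `ε`-embedding for the subspace `V` of `U`. -/
def IsEmb {n k : ℕ} (R : Matrix (Fin n) (Fin n) 𝕂) (Θ : Matrix (Fin k) (Fin n) 𝕂)
    (V : Submodule 𝕂 (Fin n → 𝕂)) (ε : ℝ) : Prop :=
  ∀ x ∈ V, ∀ y ∈ V, ‖ipU R x y - ipUS Θ x y‖ ≤ ε * normU R x * normU R y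

/-- Distance (in `‖·‖_U`) from `v` to the subspace `W`; equals `‖v - P_W v‖_U`
where `P_W` is the `⟨·,·⟩_U`-orthogonal projection onto `W`. -/
def distU {n : ℕ} (R : Matrix (Fin n) (Fin n) 𝕂) (v : Fin n → 𝕂)
    (W : Submodule 𝕂 (Fin n → 𝕂)) : ℝ :=
  sInf {t | ∃ w ∈ W, t = normU R (v - w)}

/-- Set of ratios `num x / den x` over nonzero `x ∈ S`. -/
def ratioSet {n : ℕ} (S : Submodule 𝕂 (Fin n → 𝕂)) (num den : (Fin n → 𝕂) → ℝ) : Set ℝ :=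
  {t | ∃ x ∈ S, x ≠ 0 ∧ t = num x / den x}

/-- Library `L_r(D)` of all subspaces spanned by `r` vectors from the dictionary `D`. -/
def LrD {n : ℕ} (D : Finset (Fin n → 𝕂)) (r : ℕ) : Set (Submodule 𝕂 (Fin n → 𝕂)) :=
  {W | ∃ S : Finset (Fin n → 𝕂), S ⊆ D ∧ S.card = r ∧
    W = Submodule.span 𝕂 (S : Set (Fin n → 𝕂))}

/-- Set of ratios `num x / den x` over nonzero `x ∈ span{u} + W` with `W ∈ L_r(D)`. -/
def dictRatioSet {n : ℕ} (D : Finset (Fin n → 𝕂)) (r : ℕ) (u : Fin n → 𝕂)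
    (num den : (Fin n → 𝕂) → ℝ) : Set ℝ :=
  {t | ∃ W ∈ LrD D r, ∃ x ∈ Submodule.span 𝕂 {u} ⊔ W, x ≠ 0 ∧ t = num x / den x}

/-- The subspace `R_r(U_r) = span {R⁻¹ (b - A x) : x ∈ U_r}`. -/
def RrSub {n : ℕ} (R A : Matrix (Fin n) (Fin n) 𝕂) (b : Fin n → 𝕂)
    (Ur : Submodule 𝕂 (Fin n → 𝕂)) : Submodule 𝕂 (Fin n → 𝕂) :=
  Submodule.span 𝕂 {v | ∃ x ∈ Ur, v = R⁻¹ *ᵥ (b - A *ᵥ x)}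

/-- Dictionary-based `r`-width `σ_r(M; K)`. -/
def sigmaW {n : ℕ} (R : Matrix (Fin n) (Fin n) 𝕂) (M : Set (Fin n → 𝕂)) (r K : ℕ) : ℝ :=
  sInf {t | ∃ D : Finset (Fin n → 𝕂), D.card = K ∧
    t = sSup {s | ∃ v ∈ M, s = sInf {e | ∃ W ∈ LrD D r, e = distU R v W}}}

/-- Nonlinear Kolmogorov `r`-width `d_r(M; m)` with a library of `m` subspaces. -/
def dW {n : ℕ} (R : Matrix (Fin n) (Fin n) 𝕂) (M : Set (Fin n → 𝕂)) (r m : ℕ) : ℝ :=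
  sInf {t | ∃ L : Finset (Submodule 𝕂 (Fin n → 𝕂)), L.card = m ∧
    (∀ W ∈ L, Module.finrank 𝕂 ↥W ≤ r) ∧
    t = sSup {s | ∃ v ∈ M, s = sInf {e | ∃ W ∈ L, e = distU R v W}}}

/-- A posteriori estimator `ω̄` of the embedding constant of `Θ` for `V`,
computed from a second embedding `Θs`. -/
def omegaBar {n k ks : ℕ} (ε : ℝ) (Θ : Matrix (Fin k) (Fin n) 𝕂)
    (Θs : Matrix (Fin ks) (Fin n) 𝕂) (V : Submodule 𝕂 (Fin n → 𝕂)) : ℝ :=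
  max (1 - (1 - ε) * sInf {t | ∃ x ∈ V, x ≠ 0 ∧ t = (normUS Θ x / normUS Θs x) ^ 2})
      ((1 + ε) * sSup {t | ∃ x ∈ V, x ≠ 0 ∧ t = (normUS Θ x / normUS Θs x) ^ 2} - 1)

/-! ### Auxiliary lemmas -/

open scoped MatrixOrder Matrix.Norms.L2Operator

section Aux

variable {𝕂 : Type*} [RCLike 𝕂]

lemma norm2_eq_norm {n : ℕ} (x : Fin n → 𝕂) :
    norm2 x = ‖(WithLp.equiv 2 (Fin n → 𝕂)).symm x‖ := by
  rw [EuclideanSpace.norm_eq]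
  unfold norm2 ip2
  congr 1
  rw [dotProduct, map_sum]
  congr 1
  ext i
  rw [Pi.star_apply, RCLike.star_def, RCLike.conj_mul, WithLp.equiv_symm_apply, WithLp.ofLp_toLp,
    ← RCLike.ofReal_pow, RCLike.ofReal_re]

lemma norm2_nonneg' {n : ℕ} (x : Fin n → 𝕂) : 0 ≤ norm2 x := Real.sqrt_nonneg _

lemma norm2_zero' {n : ℕ} : norm2 (0 : Fin n → 𝕂) = 0 := by
  simp [norm2, ip2]

lemma norm2_pos {n : ℕ} {x : Fin n → 𝕂} (hx : x ≠ 0) : 0 < norm2 x := by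
  rw [norm2_eq_norm, norm_pos_iff]
  intro h
  exact hx (funext fun i => by simpa using congrArg (fun v : EuclideanSpace 𝕂 (Fin n) => v i) h)

lemma exists_mulVec_bound {m n : ℕ} (M : Matrix (Fin m) (Fin n) 𝕂) :
    ∃ C : ℝ, 0 ≤ C ∧ ∀ v, norm2 (M *ᵥ v) ≤ C * norm2 v := by
  let L := LinearMap.toContinuousLinearMap (Matrix.toEuclideanLin M)
  refine ⟨‖L‖, norm_nonneg _, fun v => ?_⟩
  have h := L.le_opNorm ((WithLp.equiv 2 (Fin n → 𝕂)).symm v)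
  rw [norm2_eq_norm, norm2_eq_norm]
  simpa [L, LinearMap.coe_toContinuousLinearMap', Matrix.toEuclideanLin_apply_piLp_toLp, WithLp.equiv_symm_apply,
    Matrix.toLin'_apply] using h

lemma sqrt_det_isUnit {n : ℕ} {R : Matrix (Fin n) (Fin n) 𝕂} (hR : R.PosDef) :
    IsUnit (CFC.sqrt R).det := by
  have h : (CFC.sqrt R).det * (CFC.sqrt R).det = R.det := by
    rw [← Matrix.det_mul, CFC.sqrt_mul_sqrt_self R hR.posSemidef.nonneg]
  have hRdet : R.det ≠ 0 := by
    have := hR.isUnit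
    rw [Matrix.isUnit_iff_isUnit_det] at this
    exact this.ne_zero
  rw [isUnit_iff_ne_zero]
  intro h0
  rw [h0, zero_mul] at h
  exact hRdet h.symm

lemma normU_eq_sqrtMul {n : ℕ} {R : Matrix (Fin n) (Fin n) 𝕂} (hR : R.PosDef)
    (v : Fin n → 𝕂) : normU R v = norm2 ((CFC.sqrt R) *ᵥ v) := by
  have hBH : (CFC.sqrt R).conjTranspose = (CFC.sqrt R) :=
    (Matrix.nonneg_iff_posSemidef.mp (CFC.sqrt_nonneg R)).1
  have hBB : (CFC.sqrt R) * (CFC.sqrt R) = R := CFC.sqrt_mul_sqrt_self R hR.posSemidef.nonneg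
  have key : star (R *ᵥ v) ⬝ᵥ v =
      star ((CFC.sqrt R) *ᵥ v) ⬝ᵥ ((CFC.sqrt R) *ᵥ v) := by
    rw [Matrix.star_mulVec, Matrix.star_mulVec, hR.1, hBH,
      ← Matrix.dotProduct_mulVec, ← Matrix.dotProduct_mulVec,
      Matrix.mulVec_mulVec, hBB]
  unfold normU ipU ip2 norm2
  rw [key]
  rfl

lemma normU_nonneg' {n : ℕ} (R : Matrix (Fin n) (Fin n) 𝕂) (v : Fin n → 𝕂) :
    0 ≤ normU R v := Real.sqrt_nonneg _

lemma normU_pos {n : ℕ} {R : Matrix (Fin n) (Fin n) 𝕂} (hR : R.PosDef)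
    {v : Fin n → 𝕂} (hv : v ≠ 0) : 0 < normU R v := by
  rw [normU_eq_sqrtMul hR]
  apply norm2_pos
  intro h
  apply hv
  have hinj : Function.Injective (CFC.sqrt R).mulVec :=
    Matrix.mulVec_injective_iff_isUnit.mpr
      ((Matrix.isUnit_iff_isUnit_det _).mpr (sqrt_det_isUnit hR))
  apply hinj
  rw [h, Matrix.mulVec_zero]

lemma normU_zero' {n : ℕ} (R : Matrix (Fin n) (Fin n) 𝕂) :
    normU R (0 : Fin n → 𝕂) = 0 := by
  simp [normU, ipU, ip2]

end Aux

/-- Singular value bounds for the sketched dictionary-based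
least-squares matrix. -/
theorem sketched_dictionary_matrix_singular_value_bounds
    {𝕂 : Type*} [RCLike 𝕂] {n k K r : ℕ}
    (R A : Matrix (Fin n) (Fin n) 𝕂) (hR : R.PosDef) (hA : IsUnit A.det)
    (Θ : Matrix (Fin k) (Fin n) 𝕂)
    (b u : Fin n → 𝕂) (hu : u = A⁻¹ *ᵥ b)
    (UK : Matrix (Fin n) (Fin K) 𝕂)
    (hinj : Function.Injective fun j : Fin K => fun i => UK i j)
    (D : Finset (Fin n → 𝕂))
    (hD : D = Finset.image (fun j : Fin K => fun i => UK i j) Finset.univ)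
    (φ : Fin r → Fin K) (hφ : Function.Injective φ)
    (ζΘ ιΘ : ℝ)
    (hζ : ζΘ = sInf (dictRatioSet D r u (fun x => normDualS Θ R (A *ᵥ x)) (normU R)))
    (hι : ιΘ = sSup (dictRatioSet D r u (fun x => normDualS Θ R (A *ᵥ x)) (normU R)))
    (Smin Smax : ℝ)
    (hSmin : Smin = sInf {t | ∃ z : Fin K → 𝕂, z ≠ 0 ∧
        (∃ s : Finset (Fin K), s.card ≤ r ∧ ∀ i ∉ s, z i = 0) ∧
        t = normU R (UK *ᵥ z) / norm2 z})
    (hSmax : Smax = sSup {t | ∃ z : Fin K → 𝕂, z ≠ 0 ∧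
        (∃ s : Finset (Fin K), s.card ≤ r ∧ ∀ i ∉ s, z i = 0) ∧
        t = normU R (UK *ᵥ z) / norm2 z}) :
    ∀ x : Fin r → 𝕂,
      ζΘ * Smin * norm2 x ≤ norm2 ((Θ * R⁻¹ * A * UK.submatrix id φ) *ᵥ x) ∧
      norm2 ((Θ * R⁻¹ * A * UK.submatrix id φ) *ᵥ x) ≤ ιΘ * Smax * norm2 x := by
  intro x
  classical
  have hBunit : IsUnit (CFC.sqrt R) :=
    (Matrix.isUnit_iff_isUnit_det _).mpr (sqrt_det_isUnit hR)
  -- the extended coefficient vector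
  set z : Fin K → 𝕂 := Function.extend φ x 0 with hzdef
  have hzφ : ∀ i, z (φ i) = x i := fun i => hφ.extend_apply x 0 i
  have hz0 : ∀ j, j ∉ Finset.image φ Finset.univ → z j = 0 := by
    intro j hj
    rw [hzdef]
    rw [Function.extend_apply' x (0 : Fin K → 𝕂) j]
    · rfl
    · rintro ⟨i, rfl⟩
      exact hj (Finset.mem_image.mpr ⟨i, Finset.mem_univ i, rfl⟩)
  have e1 : UK *ᵥ z = UK.submatrix id φ *ᵥ x := by
    funext i0
    show ∑ j, UK i0 j * z j = ∑ i, UK.submatrix id φ i0 i * x i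
    rw [← Finset.sum_subset (Finset.subset_univ (Finset.image φ Finset.univ))
      (fun j _ hj => by rw [hz0 j hj, mul_zero])]
    rw [Finset.sum_image (fun a _ b _ h => hφ h)]
    exact Finset.sum_congr rfl fun i _ => by
      rw [hzφ, Matrix.submatrix_apply, id]
  have e2 : norm2 z = norm2 x := by
    unfold norm2 ip2
    congr 2
    show ∑ j, star (z j) * z j = ∑ i, star (x i) * x i
    rw [← Finset.sum_subset (Finset.subset_univ (Finset.image φ Finset.univ))
      (fun j _ hj => by rw [hz0 j hj, star_zero, zero_mul])]
    rw [Finset.sum_image (fun a _ b _ h => hφ h)]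
    exact Finset.sum_congr rfl fun i _ => by rw [hzφ]
  set y : Fin n → 𝕂 := UK.submatrix id φ *ᵥ x with hydef
  have hgoal : norm2 ((Θ * R⁻¹ * A * UK.submatrix id φ) *ᵥ x) = normDualS Θ R (A *ᵥ y) := by
    have hvec : (Θ * R⁻¹ * A * UK.submatrix id φ) *ᵥ x = Θ *ᵥ (R⁻¹ *ᵥ (A *ᵥ y)) := by
      rw [hydef]
      simp only [Matrix.mulVec_mulVec, Matrix.mul_assoc]
    rw [hvec]
    rfl
  -- nonnegativity of the ratio sets
  have hdictnn : ∀ t ∈ dictRatioSet D r u (fun x => normDualS Θ R (A *ᵥ x)) (normU R),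
      0 ≤ t := by
    rintro t ⟨W, hW, v, hv, hv0, rfl⟩
    exact div_nonneg (Real.sqrt_nonneg _) (Real.sqrt_nonneg _)
  have hSsetnn : ∀ t ∈ {t | ∃ z : Fin K → 𝕂, z ≠ 0 ∧
      (∃ s : Finset (Fin K), s.card ≤ r ∧ ∀ i ∉ s, z i = 0) ∧
      t = normU R (UK *ᵥ z) / norm2 z}, 0 ≤ t := by
    rintro t ⟨w, hw0, hw, rfl⟩
    exact div_nonneg (Real.sqrt_nonneg _) (Real.sqrt_nonneg _)
  -- uniform bounds (operator norms)
  obtain ⟨C, hC0, hC⟩ := exists_mulVec_bound (Θ * R⁻¹ * A * (CFC.sqrt R)⁻¹)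
  have hnum_eq : ∀ v : Fin n → 𝕂,
      normDualS Θ R (A *ᵥ v) = norm2 ((Θ * R⁻¹ * A) *ᵥ v) := by
    intro v
    show norm2 (Θ *ᵥ (R⁻¹ *ᵥ (A *ᵥ v))) = _
    simp only [Matrix.mulVec_mulVec, Matrix.mul_assoc]
  have hCb : ∀ v : Fin n → 𝕂, normDualS Θ R (A *ᵥ v) ≤ C * normU R v := by
    intro v
    rw [hnum_eq, normU_eq_sqrtMul hR]
    have hmat : (Θ * R⁻¹ * A * (CFC.sqrt R)⁻¹) * (CFC.sqrt R)
        = Θ * R⁻¹ * A := by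
      rw [Matrix.mul_assoc,
        Matrix.nonsing_inv_mul _ (sqrt_det_isUnit hR), Matrix.mul_one]
    calc norm2 ((Θ * R⁻¹ * A) *ᵥ v)
        = norm2 ((Θ * R⁻¹ * A * (CFC.sqrt R)⁻¹) *ᵥ ((CFC.sqrt R) *ᵥ v)) := by
          rw [Matrix.mulVec_mulVec, hmat]
      _ ≤ C * norm2 ((CFC.sqrt R) *ᵥ v) := hC _
  have hbddA : BddAbove (dictRatioSet D r u (fun x => normDualS Θ R (A *ᵥ x)) (normU R)) := by
    refine ⟨C, ?_⟩
    rintro t ⟨W, hW, v, hv, hv0, rfl⟩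
    rw [div_le_iff₀ (normU_pos hR hv0)]
    exact hCb v
  obtain ⟨C', hC'0, hC'⟩ := exists_mulVec_bound ((CFC.sqrt R) * UK)
  have hCb' : ∀ w : Fin K → 𝕂, normU R (UK *ᵥ w) ≤ C' * norm2 w := by
    intro w
    rw [normU_eq_sqrtMul hR, Matrix.mulVec_mulVec]
    exact hC' w
  have hbddS : BddAbove {t | ∃ z : Fin K → 𝕂, z ≠ 0 ∧
      (∃ s : Finset (Fin K), s.card ≤ r ∧ ∀ i ∉ s, z i = 0) ∧
      t = normU R (UK *ᵥ z) / norm2 z} := by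
    refine ⟨C', ?_⟩
    rintro t ⟨w, hw0, hw, rfl⟩
    rw [div_le_iff₀ (norm2_pos hw0)]
    exact hCb' w
  have hζ0 : 0 ≤ ζΘ := by rw [hζ]; exact Real.sInf_nonneg hdictnn
  have hι0 : 0 ≤ ιΘ := by rw [hι]; exact Real.sSup_nonneg hdictnn
  have hSmin0 : 0 ≤ Smin := by rw [hSmin]; exact Real.sInf_nonneg hSsetnn
  have hSmax0 : 0 ≤ Smax := by rw [hSmax]; exact Real.sSup_nonneg hSsetnn
  by_cases hx0 : x = 0
  · subst hx0
    constructor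
    · simp [norm2_zero']
    · simp [norm2_zero']
  · have hzne : z ≠ 0 := by
      intro h
      apply hx0
      funext i
      have hh := congrFun h (φ i)
      rw [hzφ i] at hh
      simpa using hh
    have hm : 0 < norm2 x := norm2_pos hx0
    have hmem : normU R y / norm2 x ∈ {t | ∃ z : Fin K → 𝕂, z ≠ 0 ∧
        (∃ s : Finset (Fin K), s.card ≤ r ∧ ∀ i ∉ s, z i = 0) ∧
        t = normU R (UK *ᵥ z) / norm2 z} := by
      refine ⟨z, hzne, ⟨Finset.image φ Finset.univ, ?_, hz0⟩, ?_⟩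
      · rw [Finset.card_image_of_injective _ hφ, Finset.card_univ, Fintype.card_fin]
      · rw [e1, e2]
    have hSminle : Smin ≤ normU R y / norm2 x := by
      rw [hSmin]
      exact csInf_le ⟨0, fun t ht => hSsetnn t ht⟩ hmem
    have hSmaxge : normU R y / norm2 x ≤ Smax := by
      rw [hSmax]
      exact le_csSup hbddS hmem
    by_cases hy0 : y = 0
    · -- the vector `y` vanishes: everything degenerates to `0`
      have hval : norm2 ((Θ * R⁻¹ * A * UK.submatrix id φ) *ᵥ x) = 0 := by
        rw [hgoal, hy0]
        show norm2 (Θ *ᵥ (R⁻¹ *ᵥ (A *ᵥ (0 : Fin n → 𝕂)))) = 0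
        simp [norm2_zero']
      have hSmineq : Smin = 0 := by
        refine le_antisymm ?_ hSmin0
        have h0 : normU R y / norm2 x = 0 := by
          rw [hy0, normU_zero', zero_div]
        rw [← h0]
        exact hSminle
      constructor
      · rw [hval, hSmineq, mul_zero, zero_mul]
      · rw [hval]
        exact mul_nonneg (mul_nonneg hι0 hSmax0) (norm2_nonneg' x)
    · -- the generic case
      have hd : 0 < normU R y := normU_pos hR hy0
      have hcolinj : Function.Injective (fun i : Fin r => (fun i0 => UK i0 (φ i))) := by
        intro a b hab
        exact hφ (hinj hab)
      have hScard : (Finset.image (fun i : Fin r => (fun i0 => UK i0 (φ i)))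
          Finset.univ).card = r := by
        rw [Finset.card_image_of_injective _ hcolinj, Finset.card_univ, Fintype.card_fin]
      have hSD : Finset.image (fun i : Fin r => (fun i0 => UK i0 (φ i))) Finset.univ ⊆ D := by
        intro v hv
        obtain ⟨i, _, rfl⟩ := Finset.mem_image.mp hv
        rw [hD]
        exact Finset.mem_image.mpr ⟨φ i, Finset.mem_univ _, rfl⟩
      have hW : Submodule.span 𝕂
          ((Finset.image (fun i : Fin r => (fun i0 => UK i0 (φ i))) Finset.univ : Finset _) :
            Set (Fin n → 𝕂)) ∈ LrD D r :=
        ⟨_, hSD, hScard, rfl⟩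
      have hyW : y ∈ Submodule.span 𝕂
          ((Finset.image (fun i : Fin r => (fun i0 => UK i0 (φ i))) Finset.univ : Finset _) :
            Set (Fin n → 𝕂)) := by
        have hysum : y = ∑ i : Fin r, x i • (fun i0 => UK i0 (φ i)) := by
          funext i0
          rw [Finset.sum_apply]
          show ∑ j, UK.submatrix id φ i0 j * x j = _
          exact Finset.sum_congr rfl fun i _ => by
            rw [Matrix.submatrix_apply, id, Pi.smul_apply, smul_eq_mul, mul_comm]
        rw [hysum]
        exact Submodule.sum_mem _ fun i _ => Submodule.smul_mem _ _
          (Submodule.subset_span (Finset.mem_coe.mpr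
            (Finset.mem_image.mpr ⟨i, Finset.mem_univ _, rfl⟩)))
      have hdictmem : normDualS Θ R (A *ᵥ y) / normU R y ∈
          dictRatioSet D r u (fun x => normDualS Θ R (A *ᵥ x)) (normU R) :=
        ⟨_, hW, y, Submodule.mem_sup_right hyW, hy0, rfl⟩
      have hζle : ζΘ ≤ normDualS Θ R (A *ᵥ y) / normU R y := by
        rw [hζ]
        exact csInf_le ⟨0, fun t ht => hdictnn t ht⟩ hdictmem
      have hιge : normDualS Θ R (A *ᵥ y) / normU R y ≤ ιΘ := by
        rw [hι]
        exact le_csSup hbddA hdictmem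
      have ha0 : 0 ≤ normDualS Θ R (A *ᵥ y) := Real.sqrt_nonneg _
      have hsplit : (normDualS Θ R (A *ᵥ y) / normU R y) * (normU R y / norm2 x)
          = normDualS Θ R (A *ᵥ y) / norm2 x := by
        rw [div_mul_div_comm, mul_comm (normDualS Θ R (A *ᵥ y)) (normU R y),
          mul_div_mul_left _ _ hd.ne']
      constructor
      · rw [hgoal]
        have h1 : ζΘ * Smin ≤
            (normDualS Θ R (A *ᵥ y) / normU R y) * (normU R y / norm2 x) :=
          mul_le_mul hζle hSminle hSmin0 (div_nonneg ha0 hd.le)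
        calc ζΘ * Smin * norm2 x
            ≤ (normDualS Θ R (A *ᵥ y) / norm2 x) * norm2 x := by
              rw [← hsplit]
              exact mul_le_mul_of_nonneg_right h1 hm.le
          _ = normDualS Θ R (A *ᵥ y) := div_mul_cancel₀ _ hm.ne'
      · rw [hgoal]
        have h1 : (normDualS Θ R (A *ᵥ y) / normU R y) * (normU R y / norm2 x)
            ≤ ιΘ * Smax :=
          mul_le_mul hιge hSmaxge (div_nonneg hd.le hm.le) hι0
        calc normDualS Θ R (A *ᵥ y)
            = (normDualS Θ R (A *ᵥ y) / norm2 x) * norm2 x :=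
              (div_mul_cancel₀ _ hm.ne').symm
          _ = ((normDualS Θ R (A *ᵥ y) / normU R y) * (normU R y / norm2 x)) * norm2 x := by
              rw [hsplit]
          _ ≤ (ιΘ * Smax) * norm2 x :=
              mul_le_mul_of_nonneg_right h1 hm.le


end
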